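/- Let 0 < ȳ_min < ȳ_max, λ ≥ 0 and T > 0, and suppose that ȳ_min ≤ λ ξ_T(τ) ≤ ȳ_max for all τ ∈ [0, T] (i.e., the output of the 1-cycle with dose λ and period T stays in the prescribed corridor). Then (a₂a₃/(g₁g₂)) · ȳ_min · (1 − e^{−a₁T}) ≤ λ ≤ (a₂a₃/(g₁g₂)) · ȳ_max · (e^{a₁T} − 1). -/

import Mathlib

open Matrix

/-- The system matrix of the third-order PK model. -/
noncomputable def Amat (a₁ a₂ a₃ g₁ g₂ : ℝ) : Matrix (Fin 3) (Fin 3) ℝ :=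
  !![-a₁, 0, 0; g₁, -a₂, 0; 0, g₂, -a₃]

/-- The input vector `B = (1,0,0)ᵀ`. -/
noncomputable def Bvec : Fin 3 → ℝ := ![1, 0, 0]

/-- The output map `C x = x₃`. -/
noncomputable def Cout (x : Fin 3 → ℝ) : ℝ := x 2

/-- `ξ_T(τ) = C e^{τA} (I − e^{TA})⁻¹ B`, the output at phase `τ` of the 1-cycle
with unit dose and inter-dose interval `T`. -/
noncomputable def xi (a₁ a₂ a₃ g₁ g₂ : ℝ) (T τ : ℝ) : ℝ :=
  Cout ((NormedSpace.exp (τ • Amat a₁ a₂ a₃ g₁ g₂) *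
    (1 - NormedSpace.exp (T • Amat a₁ a₂ a₃ g₁ g₂))⁻¹).mulVec Bvec)

/-!
The 1-cycle `x τ = e^{τA} (I - e^{TA})⁻¹ B` solves `x' = A x` and satisfies `x T = x 0 - B`:
over one period the first compartment loses the unit dose, the other two return to their
initial values. Hence `x₁ τ = e^{-a₁τ} / (1 - e^{-a₁T})` lies in
`[1 / (e^{a₁T} - 1), 1 / (1 - e^{-a₁T})]` on `[0, T]`. A compartment `y' = u - a y` with
`y T = y 0` stays in `[m / a, M / a]` whenever its input `u` stays in `[m, M]`, because
`e^{at} (y t - M / a)` is nonincreasing while `e^{aT} > 1`. Two applications of this comparison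
put `ξ_T(τ) = x₃ τ` in `g₁g₂/(a₂a₃) • [1 / (e^{a₁T} - 1), 1 / (1 - e^{-a₁T})]`, and the
corridor condition at `τ = 0` gives the bounds on `λ`. The same comparison shows that a
`T`-periodic solution of `x' = A x` vanishes, which is why `I - e^{TA}` is invertible.
-/

theorem le_div_of_hasDerivAt_of_periodic {y y' : ℝ → ℝ} {a M T : ℝ} (ha : 0 < a)
    (hT : 0 < T) (hy : ∀ t ∈ Set.Icc 0 T, HasDerivAt y (y' t) t)
    (hy' : ∀ t ∈ Set.Icc 0 T, y' t ≤ M - a * y t) (hper : y T = y 0) :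
    ∀ t ∈ Set.Icc 0 T, y t ≤ M / a := by
  set z : ℝ → ℝ := fun t => Real.exp (a * t) * (y t - M / a)
  have hz : ∀ t ∈ Set.Icc 0 T,
      HasDerivAt z (a * Real.exp (a * t) * (y t - M / a) + Real.exp (a * t) * y' t) t := by
    intro t ht
    have hexp : HasDerivAt (fun s => Real.exp (a * s)) (a * Real.exp (a * t)) t := by
      simpa [mul_comm] using ((hasDerivAt_id t).const_mul a).exp
    exact hexp.mul ((hy t ht).sub_const _)
  have hanti : AntitoneOn z (Set.Icc 0 T) := by
    refine antitoneOn_of_hasDerivWithinAt_nonpos (convex_Icc 0 T)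
      (fun t ht => (hz t ht).continuousAt.continuousWithinAt)
      (fun t ht => (hz t (interior_subset ht)).hasDerivWithinAt) fun t ht => ?_
    have ht := interior_subset ht
    have hexp := Real.exp_pos (a * t)
    have : a * (y t - M / a) + y' t ≤ 0 := by
      rw [mul_sub, mul_div_cancel₀ _ ha.ne']; linarith [hy' t ht]
    nlinarith
  have hz0 : z 0 = y 0 - M / a := by simp [z]
  have hy0 : y 0 ≤ M / a := by
    have hzT := hanti (Set.left_mem_Icc.2 hT.le) (Set.right_mem_Icc.2 hT.le) hT.le
    have hexp : 1 < Real.exp (a * T) := Real.one_lt_exp_iff.2 (mul_pos ha hT)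
    simp only [z, hper, mul_zero, Real.exp_zero, one_mul] at hzT
    nlinarith
  intro t ht
  have hzt := hanti (Set.left_mem_Icc.2 hT.le) ht ht.1
  have : Real.exp (a * t) * (y t - M / a) ≤ 0 := by
    change z t ≤ 0; linarith
  linarith [nonpos_of_mul_nonpos_right this (Real.exp_pos _)]

theorem mem_Icc_div_of_hasDerivAt_of_periodic {y u : ℝ → ℝ} {a m M T : ℝ} (ha : 0 < a)
    (hT : 0 < T) (hy : ∀ t ∈ Set.Icc 0 T, HasDerivAt y (u t - a * y t) t)
    (hu : ∀ t ∈ Set.Icc 0 T, u t ∈ Set.Icc m M) (hper : y T = y 0) :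
    ∀ t ∈ Set.Icc 0 T, y t ∈ Set.Icc (m / a) (M / a) := by
  have hupper := le_div_of_hasDerivAt_of_periodic (M := M) ha hT hy
    (fun t ht => by linarith [(hu t ht).2]) hper
  have hlower := le_div_of_hasDerivAt_of_periodic (y := fun t => -y t) (M := -m) ha hT
    (fun t ht => (hy t ht).neg) (fun t ht => by linarith [(hu t ht).1]) (by simp [hper])
  intro t ht
  exact ⟨by linarith [hlower t ht, neg_div a m], hupper t ht⟩

theorem hasDerivAt_exp_smul_mulVec {n : Type*} [Fintype n] [DecidableEq n]
    (A : Matrix n n ℝ) (w : n → ℝ) (t : ℝ) :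
    HasDerivAt (fun s : ℝ => NormedSpace.exp (s • A) *ᵥ w)
      (A *ᵥ (NormedSpace.exp (t • A) *ᵥ w)) t := by
  -- Matrices carry no global normed-ring instance; any one will do, the claim is topological.
  let _ := Matrix.linftyOpNormedRing (n := n) (α := ℝ)
  let _ := Matrix.linftyOpNormedAlgebra (n := n) (R := ℝ) (α := ℝ)
  let L : Matrix n n ℝ →L[ℝ] (n → ℝ) :=
    LinearMap.toContinuousLinearMap ((LinearMap.applyₗ w).comp Matrix.toLin'.toLinearMap)
  rw [mulVec_mulVec]
  exact L.hasFDerivAt.comp_hasDerivAt t (hasDerivAt_exp_smul_const' A t)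

theorem exp_zero_smul_mulVec {n : Type*} [Fintype n] [DecidableEq n]
    (A : Matrix n n ℝ) (w : n → ℝ) : NormedSpace.exp ((0 : ℝ) • A) *ᵥ w = w := by
  rw [zero_smul, NormedSpace.exp_zero, one_mulVec]

theorem mulVec_one_sub_inv_mulVec {K n : Type*} [Field K] [Fintype n] [DecidableEq n]
    {M : Matrix n n K} (hM : IsUnit (1 - M)) (b : n → K) :
    M *ᵥ ((1 - M)⁻¹ *ᵥ b) = (1 - M)⁻¹ *ᵥ b - b := by
  have h : (1 - M) *ᵥ ((1 - M)⁻¹ *ᵥ b) = b := by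
    rw [mulVec_mulVec, mul_nonsing_inv _ ((isUnit_iff_isUnit_det _).1 hM), one_mulVec]
  set v := (1 - M)⁻¹ *ᵥ b
  rw [sub_mulVec, one_mulVec] at h
  rw [← h, sub_sub_cancel]

section ThreeCompartments

variable {a₁ a₂ a₃ g₁ g₂ T : ℝ} {x : ℝ → Fin 3 → ℝ}

theorem Amat_mulVec (v : Fin 3 → ℝ) :
    Amat a₁ a₂ a₃ g₁ g₂ *ᵥ v = ![-a₁ * v 0, g₁ * v 0 - a₂ * v 1, g₂ * v 1 - a₃ * v 2] := by
  ext i; fin_cases i <;> simp [Amat, mulVec, dotProduct, Fin.sum_univ_three] <;> ring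

theorem hasDerivAt_Amat_apply_zero {t : ℝ}
    (hx : HasDerivAt x (Amat a₁ a₂ a₃ g₁ g₂ *ᵥ x t) t) :
    HasDerivAt (fun s => x s 0) (-a₁ * x t 0) t := by
  simpa [Amat_mulVec] using hasDerivAt_pi.1 hx 0

theorem hasDerivAt_Amat_apply_one {t : ℝ}
    (hx : HasDerivAt x (Amat a₁ a₂ a₃ g₁ g₂ *ᵥ x t) t) :
    HasDerivAt (fun s => x s 1) (g₁ * x t 0 - a₂ * x t 1) t := by
  simpa [Amat_mulVec] using hasDerivAt_pi.1 hx 1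

theorem hasDerivAt_Amat_apply_two {t : ℝ}
    (hx : HasDerivAt x (Amat a₁ a₂ a₃ g₁ g₂ *ᵥ x t) t) :
    HasDerivAt (fun s => x s 2) (g₂ * x t 1 - a₃ * x t 2) t := by
  simpa [Amat_mulVec] using hasDerivAt_pi.1 hx 2

theorem Amat_apply_zero_eq_exp_mul (hx : ∀ t, HasDerivAt x (Amat a₁ a₂ a₃ g₁ g₂ *ᵥ x t) t)
    (t : ℝ) :
    x t 0 = Real.exp (-a₁ * t) * x 0 0 := by
  have hconst : ∀ s, HasDerivAt (fun s => Real.exp (a₁ * s) * x s 0) 0 s := by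
    intro s
    have hexp : HasDerivAt (fun s => Real.exp (a₁ * s)) (a₁ * Real.exp (a₁ * s)) s := by
      simpa [mul_comm] using ((hasDerivAt_id s).const_mul a₁).exp
    exact (hexp.mul (hasDerivAt_Amat_apply_zero (hx s))).congr_deriv (by ring)
  have := is_const_of_deriv_eq_zero (fun s => (hconst s).differentiableAt)
    (fun s => (hconst s).deriv) t 0
  rw [mul_zero, Real.exp_zero, one_mul] at this
  rw [← this, ← mul_assoc, ← Real.exp_add]
  simp

theorem eq_zero_of_exp_smul_Amat_mulVec_eq_self (ha₁ : 0 < a₁) (ha₂ : 0 < a₂) (ha₃ : 0 < a₃)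
    (hT : 0 < T) {w : Fin 3 → ℝ} (hw : NormedSpace.exp (T • Amat a₁ a₂ a₃ g₁ g₂) *ᵥ w = w) :
    w = 0 := by
  set x : ℝ → Fin 3 → ℝ := fun t => NormedSpace.exp (t • Amat a₁ a₂ a₃ g₁ g₂) *ᵥ w
  have hx : ∀ t, HasDerivAt x (Amat a₁ a₂ a₃ g₁ g₂ *ᵥ x t) t := hasDerivAt_exp_smul_mulVec _ w
  have hx0 : x 0 = w := exp_zero_smul_mulVec _ w
  have hper : x T = x 0 := hw.trans hx0.symm
  have hfst : ∀ t, x t 0 = 0 := by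
    have hexp : Real.exp (-a₁ * T) < 1 := Real.exp_lt_one_iff.2 (by nlinarith)
    have h := Amat_apply_zero_eq_exp_mul hx T
    rw [hper] at h
    have h0 : x 0 0 = 0 := by nlinarith
    intro t
    rw [Amat_apply_zero_eq_exp_mul hx t, h0, mul_zero]
  have hsnd := mem_Icc_div_of_hasDerivAt_of_periodic (u := fun t => g₁ * x t 0) (m := 0)
    (M := 0) ha₂ hT (fun t _ => hasDerivAt_Amat_apply_one (hx t))
    (fun t _ => by simp [hfst])
    (congrFun hper 1)
  simp only [zero_div, Set.Icc_self, Set.mem_singleton_iff] at hsnd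
  have hthd := mem_Icc_div_of_hasDerivAt_of_periodic (u := fun t => g₂ * x t 1) (m := 0)
    (M := 0) ha₃ hT (fun t _ => hasDerivAt_Amat_apply_two (hx t))
    (fun t ht => by simp [hsnd t ht])
    (congrFun hper 2)
  simp only [zero_div, Set.Icc_self, Set.mem_singleton_iff] at hthd
  have h0 : (0 : ℝ) ∈ Set.Icc 0 T := Set.left_mem_Icc.2 hT.le
  rw [← hx0]
  ext i
  fin_cases i
  exacts [hfst 0, hsnd 0 h0, hthd 0 h0]

theorem isUnit_one_sub_exp_smul_Amat (ha₁ : 0 < a₁) (ha₂ : 0 < a₂) (ha₃ : 0 < a₃)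
    (hT : 0 < T) : IsUnit (1 - NormedSpace.exp (T • Amat a₁ a₂ a₃ g₁ g₂)) := by
  rw [← mulVec_injective_iff_isUnit]
  intro v w hvw
  have h : (1 - NormedSpace.exp (T • Amat a₁ a₂ a₃ g₁ g₂)) *ᵥ (v - w) = 0 := by
    rw [mulVec_sub, hvw, sub_self]
  rw [sub_mulVec, one_mulVec, sub_eq_zero] at h
  exact sub_eq_zero.1 (eq_zero_of_exp_smul_Amat_mulVec_eq_self ha₁ ha₂ ha₃ hT h.symm)

theorem Amat_apply_zero_mem_Icc_of_jump (ha₁ : 0 < a₁) (hT : 0 < T)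
    (hx : ∀ t, HasDerivAt x (Amat a₁ a₂ a₃ g₁ g₂ *ᵥ x t) t) (hjump : x T 0 = x 0 0 - 1) :
    ∀ t ∈ Set.Icc 0 T,
      x t 0 ∈ Set.Icc (1 / (Real.exp (a₁ * T) - 1)) (1 / (1 - Real.exp (-a₁ * T))) := by
  have hE : 1 < Real.exp (a₁ * T) := Real.one_lt_exp_iff.2 (mul_pos ha₁ hT)
  have he : Real.exp (-a₁ * T) * Real.exp (a₁ * T) = 1 := by
    rw [← Real.exp_add, neg_mul, neg_add_cancel, Real.exp_zero]
  have hx0 : x 0 0 = 1 / (1 - Real.exp (-a₁ * T)) := by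
    have h := Amat_apply_zero_eq_exp_mul hx T
    rw [hjump] at h
    have : Real.exp (-a₁ * T) < 1 := by nlinarith
    rw [eq_div_iff (by linarith)]
    linarith
  intro t ht
  rw [Amat_apply_zero_eq_exp_mul hx t, hx0]
  have hlo : Real.exp (-a₁ * T) ≤ Real.exp (-a₁ * t) :=
    Real.exp_le_exp.2 (by nlinarith [ht.2])
  have hhi : Real.exp (-a₁ * t) ≤ 1 := Real.exp_le_one_iff.2 (by nlinarith [ht.1])
  have hd : 0 < 1 - Real.exp (-a₁ * T) := by nlinarith
  have hlower :
      1 / (Real.exp (a₁ * T) - 1) = Real.exp (-a₁ * T) * (1 / (1 - Real.exp (-a₁ * T))) := by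
    rw [← mul_div_assoc, mul_one, div_eq_div_iff (by linarith) hd.ne']
    linear_combination -he
  rw [hlower]
  exact ⟨mul_le_mul_of_nonneg_right hlo (by positivity),
    mul_le_of_le_one_left (by positivity) hhi⟩

theorem xi_mem_Icc (ha₁ : 0 < a₁) (ha₂ : 0 < a₂) (ha₃ : 0 < a₃)
    (hg₁ : 0 ≤ g₁) (hg₂ : 0 ≤ g₂) (hT : 0 < T) :
    ∀ τ ∈ Set.Icc 0 T, xi a₁ a₂ a₃ g₁ g₂ T τ ∈
      Set.Icc (g₁ * g₂ / (a₂ * a₃) / (Real.exp (a₁ * T) - 1))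
        (g₁ * g₂ / (a₂ * a₃) / (1 - Real.exp (-a₁ * T))) := by
  set A := Amat a₁ a₂ a₃ g₁ g₂
  set v := (1 - NormedSpace.exp (T • A))⁻¹ *ᵥ Bvec
  set x : ℝ → Fin 3 → ℝ := fun t => NormedSpace.exp (t • A) *ᵥ v
  have hx : ∀ t, HasDerivAt x (A *ᵥ x t) t := hasDerivAt_exp_smul_mulVec A v
  have hjump : x T = x 0 - Bvec := by
    rw [show x 0 = v from exp_zero_smul_mulVec A v]
    exact mulVec_one_sub_inv_mulVec (isUnit_one_sub_exp_smul_Amat ha₁ ha₂ ha₃ hT) Bvec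
  have hfst := Amat_apply_zero_mem_Icc_of_jump ha₁ hT hx (by simp [hjump, Bvec])
  have hsnd := mem_Icc_div_of_hasDerivAt_of_periodic (u := fun t => g₁ * x t 0) ha₂ hT
    (fun t _ => hasDerivAt_Amat_apply_one (hx t))
    (fun t ht => ⟨mul_le_mul_of_nonneg_left (hfst t ht).1 hg₁,
      mul_le_mul_of_nonneg_left (hfst t ht).2 hg₁⟩)
    (by simp [hjump, Bvec])
  have hthd := mem_Icc_div_of_hasDerivAt_of_periodic (u := fun t => g₂ * x t 1) ha₃ hT
    (fun t _ => hasDerivAt_Amat_apply_two (hx t))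
    (fun t ht => ⟨mul_le_mul_of_nonneg_left (hsnd t ht).1 hg₂,
      mul_le_mul_of_nonneg_left (hsnd t ht).2 hg₂⟩)
    (by simp [hjump, Bvec])
  intro τ hτ
  have hxi : xi a₁ a₂ a₃ g₁ g₂ T τ = x τ 2 := by
    simp only [xi, Cout, x, v, A, ← mulVec_mulVec]
  rw [hxi]
  convert hthd τ hτ using 2 <;> ring

end ThreeCompartments

theorem necessary_dose_bounds_general
    (a₁ a₂ a₃ g₁ g₂ : ℝ)
    (ha₁ : 0 < a₁) (ha₂ : 0 < a₂) (ha₃ : 0 < a₃) (hg₁ : 0 < g₁) (hg₂ : 0 < g₂)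
    (ymin ymax lam T : ℝ)
    (hlam : 0 ≤ lam) (hT : 0 < T)
    (hcorridor : ∀ τ ∈ Set.Icc (0 : ℝ) T,
      ymin ≤ lam * xi a₁ a₂ a₃ g₁ g₂ T τ ∧ lam * xi a₁ a₂ a₃ g₁ g₂ T τ ≤ ymax) :
    a₂ * a₃ / (g₁ * g₂) * ymin * (1 - Real.exp (-a₁ * T)) ≤ lam ∧
      lam ≤ a₂ * a₃ / (g₁ * g₂) * ymax * (Real.exp (a₁ * T) - 1) := by
  have h0 : (0 : ℝ) ∈ Set.Icc 0 T := Set.left_mem_Icc.2 hT.le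
  obtain ⟨hxi_lo, hxi_hi⟩ := xi_mem_Icc ha₁ ha₂ ha₃ hg₁.le hg₂.le hT 0 h0
  obtain ⟨hmin, hmax⟩ := hcorridor 0 h0
  have hκ : 0 < g₁ * g₂ / (a₂ * a₃) := by positivity
  have hd : 0 < 1 - Real.exp (-a₁ * T) := by
    linarith [Real.exp_lt_one_iff.2 (by nlinarith : -a₁ * T < 0)]
  have hD : 0 < Real.exp (a₁ * T) - 1 := by
    linarith [Real.one_lt_exp_iff.2 (mul_pos ha₁ hT)]
  rw [← inv_div, mul_assoc, mul_assoc, inv_mul_le_iff₀ hκ, le_inv_mul_iff₀ hκ]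
  constructor
  · have h := hmin.trans (mul_le_mul_of_nonneg_left hxi_hi hlam)
    rw [mul_div_assoc', le_div_iff₀ hd] at h
    linarith
  · have h := (mul_le_mul_of_nonneg_left hxi_lo hlam).trans hmax
    rw [mul_div_assoc', div_le_iff₀ hD] at h
    linarith

/-- Corollary 1, first statement: if the 1-cycle with parameters `(λ, T)` keeps the
output in the corridor `[ȳ_min, ȳ_max]`, then
`(a₂a₃/(g₁g₂)) ȳ_min (1 − e^{−a₁T}) ≤ λ ≤ (a₂a₃/(g₁g₂)) ȳ_max (e^{a₁T} − 1)`. -/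
theorem necessary_dose_bounds
    (a₁ a₂ a₃ g₁ g₂ : ℝ)
    (ha₁ : 0 < a₁) (ha₂ : 0 < a₂) (ha₃ : 0 < a₃) (hg₁ : 0 < g₁) (hg₂ : 0 < g₂)
    (ymin ymax lam T : ℝ)
    (hymin : 0 < ymin) (hminmax : ymin < ymax) (hlam : 0 ≤ lam) (hT : 0 < T)
    (hcorridor : ∀ τ ∈ Set.Icc (0 : ℝ) T,
      ymin ≤ lam * xi a₁ a₂ a₃ g₁ g₂ T τ ∧ lam * xi a₁ a₂ a₃ g₁ g₂ T τ ≤ ymax) :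
    a₂ * a₃ / (g₁ * g₂) * ymin * (1 - Real.exp (-a₁ * T)) ≤ lam ∧
      lam ≤ a₂ * a₃ / (g₁ * g₂) * ymax * (Real.exp (a₁ * T) - 1) :=
  necessary_dose_bounds_general a₁ a₂ a₃ g₁ g₂ ha₁ ha₂ ha₃ hg₁ hg₂ ymin ymax lam T hlam hT hcorridor
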